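/- arXiv:2102.03154 — 8 statements merged into one kernel-verified Lean document; each statement's English description precedes it below -/
import Mathlib

section
/- For every integer n ≥ 2 and every real t ∈ [0,1], the quantity μ₀(n,t) = ((3-2n)t + 1 - 2n + sqrt((1-t)·((4n-5)t + 4n² - 4n + 1)))/(2(n-1)²) satisfies μ₀(n,t) ≤ -t/n. -/
/-!
Clearing the positive denominator `2(n-1)²`, the claim becomes
`√((1-t)((4n-5)t + (2n-1)²)) ≤ 2n - 1 + (n-2)t/n`. The right side is nonnegative, and its square
exceeds the radicand by `t·(2(2n-1)(n-2)/n + 4n² - 8n + 6) + t²·((n-2)²/n² + 4n - 5)`, a sum of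
nonnegative terms once `n ≥ 2` and `t ≥ 0`.
-/

lemma sq_sub_radicand_eq (x t : ℝ) (hx : x ≠ 0) :
    (2*x - 1 + (x - 2)*t/x)^2 - (1 - t)*((4*x - 5)*t + 4*x^2 - 4*x + 1) =
      t*(2*(2*x - 1)*(x - 2)/x + 4*x^2 - 8*x + 6) + t^2*((x - 2)^2/x^2 + 4*x - 5) := by
  field_simp
  ring

lemma sqrt_radicand_le (x t : ℝ) (hx : 2 ≤ x) (ht : 0 ≤ t) :
    √((1 - t)*((4*x - 5)*t + 4*x^2 - 4*x + 1)) ≤ 2*x - 1 + (x - 2)*t/x := by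
  have hx0 : 0 < x := by linarith
  have hx2 : 0 ≤ x - 2 := by linarith
  rw [Real.sqrt_le_iff]
  refine ⟨by have := div_nonneg (mul_nonneg hx2 ht) hx0.le; linarith, sub_nonneg.mp ?_⟩
  rw [sq_sub_radicand_eq x t hx0.ne']
  have hlin : 0 ≤ 2*(2*x - 1)*(x - 2)/x + 4*x^2 - 8*x + 6 := by
    have : 0 ≤ 2*(2*x - 1)*(x - 2)/x := by
      apply div_nonneg _ hx0.le
      nlinarith
    nlinarith
  have hquad : 0 ≤ (x - 2)^2/x^2 + 4*x - 5 := by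
    have : 0 ≤ (x - 2)^2/x^2 := by positivity
    linarith
  positivity

lemma mu0_le_neg_div (x t : ℝ) (hx : 2 ≤ x) (ht : 0 ≤ t) :
    ((3 - 2*x)*t + 1 - 2*x + √((1 - t)*((4*x - 5)*t + 4*x^2 - 4*x + 1))) / (2*(x - 1)^2)
      ≤ -t/x := by
  have hx0 : x ≠ 0 := by linarith
  have hden : 0 < 2*(x - 1)^2 := by nlinarith
  have hrhs : -t/x * (2*(x - 1)^2) - ((3 - 2*x)*t + 1 - 2*x) = 2*x - 1 + (x - 2)*t/x := by
    field_simp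
    ring
  rw [div_le_iff₀ hden]
  linarith [sqrt_radicand_le x t hx ht]

theorem stmt0_general (n : ℕ) (hn : 2 ≤ n) (t : ℝ) (ht0 : 0 ≤ t) :
    ((3 - 2*(n:ℝ))*t + 1 - 2*(n:ℝ) +
        Real.sqrt ((1 - t) * ((4*(n:ℝ) - 5)*t + 4*(n:ℝ)^2 - 4*(n:ℝ) + 1)))
      / (2*((n:ℝ) - 1)^2) ≤ -t/(n:ℝ) :=
  mu0_le_neg_div n t (by exact_mod_cast hn) ht0

/-- For every integer `n ≥ 2` and `t ∈ [0,1]`, the quantity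
`μ₀(n,t) = ((3-2n)t + 1 - 2n + √((1-t)((4n-5)t + 4n² - 4n + 1)))/(2(n-1)²)`
satisfies `μ₀(n,t) ≤ -t/n`. -/
theorem stmt0 (n : ℕ) (hn : 2 ≤ n) (t : ℝ) (ht0 : 0 ≤ t) (ht1 : t ≤ 1) :
    ((3 - 2*(n:ℝ))*t + 1 - 2*(n:ℝ) +
        Real.sqrt ((1 - t) * ((4*(n:ℝ) - 5)*t + 4*(n:ℝ)^2 - 4*(n:ℝ) + 1)))
      / (2*((n:ℝ) - 1)^2) ≤ -t/(n:ℝ) :=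
  stmt0_general n hn t ht0
end

section
/- For every integer n ≥ 2 and every real t ∈ [0,1], the quantity μ₀(n,t) = ((3-2n)t + 1 - 2n + sqrt((1-t)·((4n-5)t + 4n² - 4n + 1)))/(2(n-1)²) satisfies μ₀(n,t) ≥ -(t² + (2n+1)t)/(n² - t). -/
/-!
Clearing the two positive denominators, the inequality becomes `s ≤ √y · (x² - t)` for an
explicit polynomial `s`, where `y` is the radicand. It therefore suffices that
`s² ≤ y · (x² - t)²`, and the difference of the two sides factors as
`4t(1 - t)(x - 1)³(x + 1)(x + t)²`, which is nonnegative for `x ≥ 1` and `t ∈ [0, 1]`.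
-/

open Real

lemma le_sqrt_mul_of_sq_le {s y d : ℝ} (hd : 0 ≤ d) (h : s ^ 2 ≤ y * d ^ 2) : s ≤ √y * d :=
  calc s ≤ |s| := le_abs_self s
    _ ≤ √(y * d ^ 2) := abs_le_sqrt h
    _ = √y * d := by rw [sqrt_mul' y (sq_nonneg d), sqrt_sq hd]

/-- The quantity `μ₀(x, t)`, for real `x`. -/
noncomputable def mu0 (x t : ℝ) : ℝ :=
  ((3 - 2*x)*t + 1 - 2*x + √((1 - t) * ((4*x - 5)*t + 4*x^2 - 4*x + 1))) / (2*(x - 1)^2)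

theorem neg_div_le_mu0 {x t : ℝ} (hx : 1 < x) (ht0 : 0 ≤ t) (ht1 : t ≤ 1) :
    -(t^2 + (2*x + 1)*t) / (x^2 - t) ≤ mu0 x t := by
  have hD : 0 < x^2 - t := by nlinarith
  have hc : 0 < 2*(x - 1)^2 := by nlinarith
  have key : (-(t^2 + (2*x + 1)*t) * (2*(x - 1)^2) - ((3 - 2*x)*t + 1 - 2*x) * (x^2 - t)) ^ 2
      ≤ (1 - t) * ((4*x - 5)*t + 4*x^2 - 4*x + 1) * (x^2 - t) ^ 2 := by
    have hfactor : 0 ≤ 4*t*(1 - t)*(x - 1)^3*(x + 1)*(x + t)^2 := by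
      have : 0 ≤ 1 - t := by linarith
      have : 0 ≤ x - 1 := by linarith
      have : 0 ≤ x + 1 := by linarith
      positivity
    linear_combination hfactor
  rw [mu0, div_le_div_iff₀ hD hc]
  linear_combination le_sqrt_mul_of_sq_le hD.le key

/-- For every integer `n ≥ 2` and `t ∈ [0,1]`,
`μ₀(n,t) ≥ -(t² + (2n+1)t)/(n² - t)`. -/
theorem stmt1 (n : ℕ) (hn : 2 ≤ n) (t : ℝ) (ht0 : 0 ≤ t) (ht1 : t ≤ 1) :
    ((3 - 2*(n:ℝ))*t + 1 - 2*(n:ℝ) +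
        Real.sqrt ((1 - t) * ((4*(n:ℝ) - 5)*t + 4*(n:ℝ)^2 - 4*(n:ℝ) + 1)))
      / (2*((n:ℝ) - 1)^2) ≥ -(t^2 + (2*(n:ℝ) + 1)*t)/((n:ℝ)^2 - t) :=
  neg_div_le_mu0 (by exact_mod_cast hn) ht0 ht1
end

section
/- Let n ≥ 2 be an integer, t ∈ (0,1), and μ ∈ [μ₀(n,t), -t/n], where μ₀(n,t) = ((3-2n)t + 1 - 2n + sqrt((1-t)((4n-5)t + 4n²-4n+1)))/(2(n-1)²). Set θ = -(t + (n-1)μ), q₁ = (1-θ)/(1-t), and q̃₃ = ((1+t+(n-1)μ)/(n+1))·((1+n+(n-1)(t+nμ))/(1-t)). Then q̃₃ ≤ q₁. -/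
/-!
Both sides carry the factor `1 + t + (n-1)μ = 1 - θ`, and the remaining factor of `q̃₃` is
`(n + 1 + (n-1)(t + nμ))/(n + 1) ≤ 1` because `μ ≤ -t/n`. So it suffices that `1 - θ ≥ 0`, and
for this the crude bound `√(…) ≥ 1 - t` in `μ₀(n,t)` already gives `μ₀(n,t) ≥ -(1+t)/(n-1)`.
-/

/-- The lower endpoint `μ₀(n,t)` of the admissible range of `μ`. -/
noncomputable def muZero (n t : ℝ) : ℝ :=
  ((3 - 2*n)*t + 1 - 2*n + √((1 - t) * ((4*n - 5)*t + 4*n^2 - 4*n + 1))) / (2*(n - 1)^2)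

-- The discriminant exceeds `(1 - t)^2` by `4 (1 - t) (n - 1) (n + t)`.
lemma one_sub_le_sqrt_discr {n t : ℝ} (hn : 1 ≤ n) (ht0 : 0 ≤ t) (ht1 : t ≤ 1) :
    1 - t ≤ √((1 - t) * ((4*n - 5)*t + 4*n^2 - 4*n + 1)) := by
  apply Real.le_sqrt_of_sq_le
  nlinarith [mul_nonneg (sub_nonneg.2 ht1) (mul_nonneg (sub_nonneg.2 hn) (add_nonneg ht0
    (by linarith : (0:ℝ) ≤ n)))]

lemma neg_one_add_div_le_muZero {n t : ℝ} (hn : 1 < n) (ht0 : 0 ≤ t) (ht1 : t ≤ 1) :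
    -(1 + t) / (n - 1) ≤ muZero n t := by
  have hsqrt := one_sub_le_sqrt_discr hn.le ht0 ht1
  have hn1 : 0 < n - 1 := sub_pos.2 hn
  rw [muZero, div_le_div_iff₀ hn1 (by positivity)]
  nlinarith

lemma div_mul_div_le_div {a b c d : ℝ} (ha : 0 ≤ a) (hc : 0 < c) (hd : 0 ≤ d) (hbc : b ≤ c) :
    a / c * (b / d) ≤ a / d :=
  calc a / c * (b / d) = a * (b / c) / d := by ring
    _ ≤ a * 1 / d := by gcongr; exact div_le_one_of_le₀ hbc hc.le
    _ = a / d := by rw [mul_one]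

/-- Let `n ≥ 2`, `t ∈ (0,1)`, `μ ∈ [μ₀(n,t), -t/n]`, `θ = -(t+(n-1)μ)`,
`q₁ = (1-θ)/(1-t)` and `q̃₃ = ((1+t+(n-1)μ)/(n+1))·((1+n+(n-1)(t+nμ))/(1-t))`.
Then `q̃₃ ≤ q₁`. -/
theorem stmt6 (n : ℕ) (hn : 2 ≤ n) (t μ : ℝ) (ht0 : 0 < t) (ht1 : t < 1)
    (hμl : ((3 - 2*(n:ℝ))*t + 1 - 2*(n:ℝ) +
        Real.sqrt ((1 - t) * ((4*(n:ℝ) - 5)*t + 4*(n:ℝ)^2 - 4*(n:ℝ) + 1)))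
      / (2*((n:ℝ) - 1)^2) ≤ μ)
    (hμu : μ ≤ -t/(n:ℝ))
    (θ q₁ q₃ : ℝ)
    (hθ : θ = -(t + ((n:ℝ) - 1)*μ))
    (hq₁ : q₁ = (1 - θ)/(1 - t))
    (hq₃ : q₃ = ((1 + t + ((n:ℝ) - 1)*μ)/((n:ℝ) + 1)) *
      ((1 + (n:ℝ) + ((n:ℝ) - 1)*(t + (n:ℝ)*μ))/(1 - t))) :
    q₃ ≤ q₁ := by
  have hn1 : (1:ℝ) < n := by exact_mod_cast hn
  have hθ_le_one : 0 ≤ 1 + t + ((n:ℝ) - 1)*μ := by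
    have h := (neg_one_add_div_le_muZero hn1 ht0.le ht1.le).trans hμl
    rw [div_le_iff₀ (sub_pos.2 hn1)] at h
    linarith
  have hnμ : t + (n:ℝ)*μ ≤ 0 := by
    rw [le_div_iff₀ (by linarith)] at hμu
    linarith
  rw [hq₃, hq₁, hθ, show 1 - -(t + ((n:ℝ) - 1)*μ) = 1 + t + ((n:ℝ) - 1)*μ by ring]
  exact div_mul_div_le_div hθ_le_one (by positivity) (by linarith) (by nlinarith)
end

section
/- Let n ≥ 2 be an integer, t ∈ (0,1), and μ ∈ [μ₀(n,t), -t/n] where μ₀(n,t) = ((3-2n)t + 1 - 2n + sqrt((1-t)((4n-5)t + 4n²-4n+1)))/(2(n-1)²). Set q̃₂ = (t - μ + n + 1)/(n+1) and q̃₃ = ((1+t+(n-1)μ)/(n+1))·((1+n+(n-1)(t+nμ))/(1-t)). Then q̃₂ ≤ q̃₃. -/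
/-!
Up to the positive factor `n / ((n + 1) * (1 - t))`, the difference `q̃₃ - q̃₂` is the quadratic
`g(μ) = (n - 1)² μ² + ((2n - 1) + (2n - 3) t) μ + t (t + 3)`, whose discriminant is
`(1 - t) ((4n - 5) t + 4n² - 4n + 1)`. So `μ₀(n, t)` is the larger root of `g`, and `g(μ) ≥ 0`
for every `μ ≥ μ₀(n, t)`.
-/

open Real

-- If the discriminant is negative, `√` returns `0` and the hypothesis puts `x` right of the vertex.
theorem quadratic_nonneg_of_largest_root_le {a b c x : ℝ} (ha : 0 < a)
    (hx : (-b + √(discrim a b c)) / (2 * a) ≤ x) : 0 ≤ a * (x * x) + b * x + c := by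
  have hroot : √(discrim a b c) ≤ 2 * a * x + b := by
    rw [div_le_iff₀ (by positivity)] at hx
    linarith
  have hdisc : discrim a b c ≤ (2 * a * x + b) ^ 2 :=
    (sqrt_le_left ((sqrt_nonneg _).trans hroot)).1 hroot
  have hscaled : 0 ≤ 4 * a * (a * (x * x) + b * x + c) := by
    have hsq : (2 * a * x + b) ^ 2 = discrim a b c + 4 * a * (a * (x * x) + b * x + c) := by
      rw [discrim]
      ring
    linarith
  exact (mul_nonneg_iff_of_pos_left (by positivity)).1 hscaled

theorem stmt7_general (n : ℕ) (hn : 2 ≤ n) (t μ : ℝ) (ht1 : t < 1)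
    (hμl : ((3 - 2*(n:ℝ))*t + 1 - 2*(n:ℝ) +
        Real.sqrt ((1 - t) * ((4*(n:ℝ) - 5)*t + 4*(n:ℝ)^2 - 4*(n:ℝ) + 1)))
      / (2*((n:ℝ) - 1)^2) ≤ μ)
    (q₂ q₃ : ℝ)
    (hq₂ : q₂ = (t - μ + (n:ℝ) + 1)/((n:ℝ) + 1))
    (hq₃ : q₃ = ((1 + t + ((n:ℝ) - 1)*μ)/((n:ℝ) + 1)) *
      ((1 + (n:ℝ) + ((n:ℝ) - 1)*(t + (n:ℝ)*μ))/(1 - t))) :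
    q₂ ≤ q₃ := by
  have hn1 : (0 : ℝ) < ((n : ℝ) - 1) ^ 2 := by
    have : (2 : ℝ) ≤ n := by exact_mod_cast hn
    nlinarith
  have hg :
      0 ≤ ((n : ℝ) - 1) ^ 2 * (μ * μ) + ((2 * n - 1) + (2 * n - 3) * t) * μ + t * (t + 3) := by
    refine quadratic_nonneg_of_largest_root_le hn1 (le_of_eq_of_le ?_ hμl)
    rw [discrim]
    ring_nf
  have hdiff : q₃ - q₂ = n * (((n : ℝ) - 1) ^ 2 * (μ * μ) + ((2 * n - 1) + (2 * n - 3) * t) * μ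
      + t * (t + 3)) / ((n + 1) * (1 - t)) := by
    have ht : (1 : ℝ) - t ≠ 0 := by linarith
    rw [hq₂, hq₃]
    field_simp
    ring
  rw [← sub_nonneg, hdiff]
  exact div_nonneg (mul_nonneg n.cast_nonneg hg) (mul_nonneg (by positivity) (by linarith))

/-- Let `n ≥ 2`, `t ∈ (0,1)`, `μ ∈ [μ₀(n,t), -t/n]`,
`q̃₂ = (t - μ + n + 1)/(n+1)` and
`q̃₃ = ((1+t+(n-1)μ)/(n+1))·((1+n+(n-1)(t+nμ))/(1-t))`. Then `q̃₂ ≤ q̃₃`. -/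
theorem stmt7 (n : ℕ) (hn : 2 ≤ n) (t μ : ℝ) (ht0 : 0 < t) (ht1 : t < 1)
    (hμl : ((3 - 2*(n:ℝ))*t + 1 - 2*(n:ℝ) +
        Real.sqrt ((1 - t) * ((4*(n:ℝ) - 5)*t + 4*(n:ℝ)^2 - 4*(n:ℝ) + 1)))
      / (2*((n:ℝ) - 1)^2) ≤ μ)
    (hμu : μ ≤ -t/(n:ℝ))
    (q₂ q₃ : ℝ)
    (hq₂ : q₂ = (t - μ + (n:ℝ) + 1)/((n:ℝ) + 1))
    (hq₃ : q₃ = ((1 + t + ((n:ℝ) - 1)*μ)/((n:ℝ) + 1)) *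
      ((1 + (n:ℝ) + ((n:ℝ) - 1)*(t + (n:ℝ)*μ))/(1 - t))) :
    q₂ ≤ q₃ :=
  stmt7_general n hn t μ ht1 hμl q₂ q₃ hq₂ hq₃
end

section
/- Let n ≥ 2 be an integer, t ∈ [0,1), and μ ∈ [μ₀(n,t), -t/n] where μ₀(n,t) = ((3-2n)t + 1 - 2n + sqrt((1-t)((4n-5)t + 4n²-4n+1)))/(2(n-1)²). Define A = ((1-t)/(2t+(n-1)μ))·(1/(n+1))·(3t + 2(n-1)μ - n + n(1+t+(n-1)μ)²/(1-t)) when 2t + (n-1)μ ≠ 0. Then A ≥ 0. -/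
/-!
Write `q(μ) = (n-1)²μ² + ((2n-3)t + 2n-1)μ + t² + 3t`; `μ₀` is its larger root. Clearing the
denominators, `A` is a nonnegative multiple of `(n q(μ) + (1-t)((n-2)μ + 3t)) / (2t + (n-1)μ)`.
Beyond the larger root `q` is nonnegative, and `q(-2t/(n-1)) = -(n+1)t(1-t)/(n-1) ≤ 0` places
`-2t/(n-1)` below `μ₀`, so the denominator is nonnegative; `(n-2)μ + 3t` exceeds it by `t - μ ≥ 0`.
-/

section QuadraticRoot

variable {a b c x : ℝ}

theorem quadratic_nonneg_of_root_le (ha : 0 < a)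
    (hx : (-b + √(discrim a b c)) / (2 * a) ≤ x) : 0 ≤ a * x ^ 2 + b * x + c := by
  have hsqrt : √(discrim a b c) ≤ 2 * a * x + b := by
    rw [div_le_iff₀ (by positivity)] at hx
    linarith
  have hdisc : discrim a b c ≤ (2 * a * x + b) ^ 2 := (Real.sqrt_le_iff.mp hsqrt).2
  have hid : 4 * a * (a * x ^ 2 + b * x + c) = (2 * a * x + b) ^ 2 - discrim a b c := by
    unfold discrim; ring
  nlinarith

theorem le_of_quadratic_nonpos_of_root_le (ha : 0 < a)
    (hx : (-b + √(discrim a b c)) / (2 * a) ≤ x) {y : ℝ} (hy : a * y ^ 2 + b * y + c ≤ 0) :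
    y ≤ x := by
  have hid : 4 * a * (a * y ^ 2 + b * y + c) = (2 * a * y + b) ^ 2 - discrim a b c := by
    unfold discrim; ring
  have hsq : (2 * a * y + b) ^ 2 ≤ discrim a b c := by nlinarith
  have hsqrt : 2 * a * y + b ≤ √(discrim a b c) := (le_abs_self _).trans (Real.abs_le_sqrt hsq)
  have hy_root : y ≤ (-b + √(discrim a b c)) / (2 * a) := by
    rw [le_div_iff₀ (by positivity)]
    linarith
  exact hy_root.trans hx

end QuadraticRoot

theorem neg_two_mul_le_of_root_le {N t μ : ℝ} (hN : 1 < N) (ht0 : 0 ≤ t) (ht1 : 0 ≤ 1 - t)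
    (hμ : (-((2 * N - 3) * t + 2 * N - 1) +
      √(discrim ((N - 1) ^ 2) ((2 * N - 3) * t + 2 * N - 1) (t ^ 2 + 3 * t))) /
      (2 * (N - 1) ^ 2) ≤ μ) :
    -2 * t ≤ (N - 1) * μ := by
  have hq : (N - 1) ^ 2 * (-2 * t / (N - 1)) ^ 2
      + ((2 * N - 3) * t + 2 * N - 1) * (-2 * t / (N - 1)) + (t ^ 2 + 3 * t)
      = -((N + 1) * t * (1 - t)) / (N - 1) := by
    field_simp [show N - 1 ≠ 0 by linarith]
    ring
  have hle := le_of_quadratic_nonpos_of_root_le (by nlinarith) hμ (by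
    rw [hq]
    exact div_nonpos_of_nonpos_of_nonneg
      (neg_nonpos.mpr (mul_nonneg (by positivity) ht1)) (by linarith))
  rw [div_le_iff₀ (by linarith)] at hle
  linarith

theorem stmt9_general (n : ℕ) (hn : 2 ≤ n) (t μ : ℝ) (ht0 : 0 ≤ t) (ht1 : t < 1)
    (hμl : ((3 - 2*(n:ℝ))*t + 1 - 2*(n:ℝ) +
        Real.sqrt ((1 - t) * ((4*(n:ℝ) - 5)*t + 4*(n:ℝ)^2 - 4*(n:ℝ) + 1)))
      / (2*((n:ℝ) - 1)^2) ≤ μ)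
    (hμu : μ ≤ -t/(n:ℝ))
    (A : ℝ)
    (hA : A = ((1 - t)/(2*t + ((n:ℝ) - 1)*μ)) * (1/((n:ℝ) + 1)) *
      (3*t + 2*((n:ℝ) - 1)*μ - (n:ℝ) + (n:ℝ)*(1 + t + ((n:ℝ) - 1)*μ)^2/(1 - t))) :
    A ≥ 0 := by
  have hN : (2 : ℝ) ≤ n := by exact_mod_cast hn
  set N : ℝ := (n : ℝ)
  have ht : 0 < 1 - t := by linarith
  have hroot : (-((2 * N - 3) * t + 2 * N - 1) +
      √(discrim ((N - 1) ^ 2) ((2 * N - 3) * t + 2 * N - 1) (t ^ 2 + 3 * t))) /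
      (2 * (N - 1) ^ 2) ≤ μ := by
    have hdisc : discrim ((N - 1) ^ 2) ((2 * N - 3) * t + 2 * N - 1) (t ^ 2 + 3 * t) =
        (1 - t) * ((4 * N - 5) * t + 4 * N ^ 2 - 4 * N + 1) := by
      unfold discrim; ring
    rw [hdisc]
    convert hμl using 2
    ring
  have ha : 0 < (N - 1) ^ 2 := by nlinarith
  have hq := quadratic_nonneg_of_root_le ha hroot
  have hD : 0 ≤ 2 * t + (N - 1) * μ := by
    linarith [neg_two_mul_le_of_root_le (by linarith) ht0 ht.le hroot]
  have hμ : μ ≤ 0 := hμu.trans (div_nonpos_of_nonpos_of_nonneg (by linarith) (by linarith))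
  have hE : 3*t + 2*(N - 1)*μ - N + N*(1 + t + (N - 1)*μ)^2/(1 - t) =
      N * ((N - 1) ^ 2 * μ ^ 2 + ((2 * N - 3) * t + 2 * N - 1) * μ + (t ^ 2 + 3 * t)) / (1 - t)
        + ((2 * t + (N - 1) * μ) + t - μ) := by
    field_simp
    ring
  rw [hA, hE]
  exact mul_nonneg (mul_nonneg (div_nonneg ht.le hD) (by positivity))
    (add_nonneg (div_nonneg (mul_nonneg (by linarith) hq) ht.le) (by linarith))

/-- Let `n ≥ 2`, `t ∈ [0,1)`, `μ ∈ [μ₀(n,t), -t/n]` with `2t + (n-1)μ ≠ 0`, and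
`A = ((1-t)/(2t+(n-1)μ))·(1/(n+1))·(3t + 2(n-1)μ - n + n(1+t+(n-1)μ)²/(1-t))`.
Then `A ≥ 0`. -/
theorem stmt9 (n : ℕ) (hn : 2 ≤ n) (t μ : ℝ) (ht0 : 0 ≤ t) (ht1 : t < 1)
    (hμl : ((3 - 2*(n:ℝ))*t + 1 - 2*(n:ℝ) +
        Real.sqrt ((1 - t) * ((4*(n:ℝ) - 5)*t + 4*(n:ℝ)^2 - 4*(n:ℝ) + 1)))
      / (2*((n:ℝ) - 1)^2) ≤ μ)
    (hμu : μ ≤ -t/(n:ℝ))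
    (hden : 2*t + ((n:ℝ) - 1)*μ ≠ 0)
    (A : ℝ)
    (hA : A = ((1 - t)/(2*t + ((n:ℝ) - 1)*μ)) * (1/((n:ℝ) + 1)) *
      (3*t + 2*((n:ℝ) - 1)*μ - (n:ℝ) + (n:ℝ)*(1 + t + ((n:ℝ) - 1)*μ)^2/(1 - t))) :
    A ≥ 0 :=
  stmt9_general n hn t μ ht0 ht1 hμl hμu A hA
end

section
/- Let n ≥ 2 be an integer, s ∈ [-n,0], and ν ∈ [-s/n, ν₀(n,s)] where ν₀(n,s) = ((3-2n)s+1-2n+sqrt((1-s)((4n-5)s+4n²-4n+1)))/(2(n-1)²). Set ϑ = -(s + (n-1)ν). Then -n ≤ s ≤ ϑ ≤ -s/n ≤ ν ≤ 1. -/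
/-! Write `A = (1 - s)((4n - 5)s + 4n² - 4n + 1)` for the radicand in `ν₀`. The identities
`((2n - 1)(1 - s))² - A = 4(n² - 1)s(s - 1)` and `(2n² - 2n + 1 + (2n - 3)s)² - A = 4(n - 1)²(s + n)²`
bound `√A` from above in two ways: the first gives `(n - 1)ν₀ ≤ -2s`, which is `s ≤ ϑ`, and the
second gives `ν₀ ≤ 1`. Finally `ϑ ≤ -s/n` is a rearrangement of `-s/n ≤ ν`. -/

noncomputable def nuZeroDisc (N s : ℝ) : ℝ :=
  (1 - s) * ((4*N - 5)*s + 4*N^2 - 4*N + 1)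

noncomputable def nuZero (N s : ℝ) : ℝ :=
  ((3 - 2*N)*s + 1 - 2*N + Real.sqrt (nuZeroDisc N s)) / (2*(N - 1)^2)

section
variable {N s : ℝ}

lemma sqrt_nuZeroDisc_le_of_nonpos (hN : 1 ≤ N) (hs : s ≤ 0) :
    √(nuZeroDisc N s) ≤ (2*N - 1)*(1 - s) := by
  rw [Real.sqrt_le_left (by nlinarith)]
  have hsq : ((2*N - 1)*(1 - s))^2 - nuZeroDisc N s = 4*(N^2 - 1)*(s*(s - 1)) := by
    unfold nuZeroDisc; ring
  nlinarith [mul_nonneg (by nlinarith : (0:ℝ) ≤ N^2 - 1) (by nlinarith : 0 ≤ s*(s - 1))]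

lemma sqrt_nuZeroDisc_le_of_neg_le (hs0 : -N ≤ s) (hs1 : s ≤ 0) :
    √(nuZeroDisc N s) ≤ 2*N^2 - 2*N + 1 + (2*N - 3)*s := by
  rw [Real.sqrt_le_left (by nlinarith [sq_nonneg (N - 1), sq_nonneg (s + N - 1)])]
  have hsq : (2*N^2 - 2*N + 1 + (2*N - 3)*s)^2 - nuZeroDisc N s = 4*((N - 1)*(s + N))^2 := by
    unfold nuZeroDisc; ring
  nlinarith [sq_nonneg ((N - 1)*(s + N))]

lemma sub_one_mul_nuZero_le (hN : 1 < N) (hs : s ≤ 0) : (N - 1) * nuZero N s ≤ -2 * s := by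
  have hsqrt := sqrt_nuZeroDisc_le_of_nonpos hN.le hs
  have hN1 : 0 < N - 1 := by linarith
  rw [nuZero, ← mul_div_assoc, div_le_iff₀ (by positivity)]
  nlinarith

lemma nuZero_le_one (hN : 1 < N) (hs0 : -N ≤ s) (hs1 : s ≤ 0) : nuZero N s ≤ 1 := by
  have hsqrt := sqrt_nuZeroDisc_le_of_neg_le hs0 hs1
  rw [nuZero, div_le_one (by nlinarith)]
  nlinarith

end

/-- Let `n ≥ 2`, `s ∈ [-n,0]`, `ν ∈ [-s/n, ν₀(n,s)]` and `ϑ = -(s + (n-1)ν)`.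
Then `-n ≤ s ≤ ϑ ≤ -s/n ≤ ν ≤ 1`. -/
theorem stmt13 (n : ℕ) (hn : 2 ≤ n) (s ν : ℝ) (hs0 : -(n:ℝ) ≤ s) (hs1 : s ≤ 0)
    (hνl : -s/(n:ℝ) ≤ ν)
    (hνu : ν ≤ ((3 - 2*(n:ℝ))*s + 1 - 2*(n:ℝ) +
        Real.sqrt ((1 - s) * ((4*(n:ℝ) - 5)*s + 4*(n:ℝ)^2 - 4*(n:ℝ) + 1)))
      / (2*((n:ℝ) - 1)^2))
    (ϑ : ℝ) (hϑ : ϑ = -(s + ((n:ℝ) - 1)*ν)) :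
    -(n:ℝ) ≤ s ∧ s ≤ ϑ ∧ ϑ ≤ -s/(n:ℝ) ∧ -s/(n:ℝ) ≤ ν ∧ ν ≤ 1 := by
  change ν ≤ nuZero n s at hνu
  have hN : (1:ℝ) < n := by exact_mod_cast hn
  have hnν : -s ≤ n * ν := (div_le_iff₀' (by linarith)).mp hνl
  have hϑs : (n - 1) * ν ≤ -2 * s :=
    (mul_le_mul_of_nonneg_left hνu (by linarith)).trans (sub_one_mul_nuZero_le hN hs1)
  refine ⟨hs0, by rw [hϑ]; linarith, ?_, hνl, hνu.trans (nuZero_le_one hN hs0 hs1)⟩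
  rw [hϑ, le_div_iff₀ (by linarith)]
  nlinarith [mul_nonneg (by linarith : (0:ℝ) ≤ n - 1) (by linarith : 0 ≤ n * ν + s)]
end

section
/- Let n ≥ 2 be an integer, t ∈ (0,1), μ₀ = μ₀(n,t) = ((3-2n)t+1-2n+sqrt((1-t)((4n-5)t+4n²-4n+1)))/(2(n-1)²), and θ₀ = -(t+(n-1)μ₀). Then (θ₀ - 1)/(t - 1) = (μ₀ - 1)/(θ₀ - 1). -/
/-- Let `n ≥ 2`, `t ∈ (0,1)`, `μ₀ = μ₀(n,t)` and `θ₀ = -(t+(n-1)μ₀)`. Then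
`(θ₀ - 1)/(t - 1) = (μ₀ - 1)/(θ₀ - 1)`. -/
theorem stmt15 (n : ℕ) (hn : 2 ≤ n) (t : ℝ) (ht0 : 0 < t) (ht1 : t < 1)
    (μ₀ θ₀ : ℝ)
    (hμ₀ : μ₀ = ((3 - 2*(n:ℝ))*t + 1 - 2*(n:ℝ) +
        Real.sqrt ((1 - t) * ((4*(n:ℝ) - 5)*t + 4*(n:ℝ)^2 - 4*(n:ℝ) + 1)))
      / (2*((n:ℝ) - 1)^2))
    (hθ₀ : θ₀ = -(t + ((n:ℝ) - 1)*μ₀)) :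
    (θ₀ - 1)/(t - 1) = (μ₀ - 1)/(θ₀ - 1) := by
  have hN : (2:ℝ) ≤ (n:ℝ) := by exact_mod_cast hn
  set N := (n:ℝ)
  set r := Real.sqrt ((1 - t) * ((4*N - 5)*t + 4*N^2 - 4*N + 1)) with hrdef
  have hs : (0:ℝ) ≤ (1 - t) * ((4*N - 5)*t + 4*N^2 - 4*N + 1) := by nlinarith [mul_nonneg (le_of_lt ht0) (show (0:ℝ) ≤ 4*N-5 by linarith), sq_nonneg N]
  have hr2 : r^2 = (1 - t) * ((4*N - 5)*t + 4*N^2 - 4*N + 1) := Real.sq_sqrt hs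
  have hr0 : 0 ≤ r := Real.sqrt_nonneg _
  have hrgt : 1 - t < r := by
    by_contra h
    push_neg at h
    have h1 : 0 ≤ (1 - t - r) * (1 - t + r) := by
      apply mul_nonneg <;> linarith
    nlinarith [hr2, mul_pos (show (0:ℝ) < 1 - t by linarith) (show (0:ℝ) < (4*N-4)*t + 4*N^2 - 4*N by nlinarith)]
  have hNe : N - 1 ≠ 0 := by nlinarith
  have hθ1 : θ₀ - 1 = (1 - t - r) / (2*(N-1)) := by
    rw [hθ₀, hμ₀]; field_simp; ring
  have hθne : θ₀ - 1 ≠ 0 := by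
    rw [hθ1]
    apply div_ne_zero (by linarith) (by intro h; apply hNe; linarith)
  have htne : t - 1 ≠ 0 := by linarith
  rw [div_eq_div_iff htne hθne, hθ1, hμ₀]
  field_simp
  nlinarith [hr2, sq_nonneg (N-1)]
end

section
/- Let n ≥ 2 be an integer, s ∈ [-n,0] and ν ∈ [-s/n, ν₀(n,s)] where ν₀(n,s) = ((3-2n)s+1-2n+sqrt((1-s)((4n-5)s+4n²-4n+1)))/(2(n-1)²). Define D = n - (s-s²)/(2s+(n-1)ν) (interpreted as its limiting value when the denominator vanishes). Then 0 ≤ D ≤ n, with D > 0 whenever s > -n. -/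
set_option maxHeartbeats 1000000


/-- Let `n ≥ 2`, `s ∈ [-n,0]`, `ν ∈ [-s/n, ν₀(n,s)]` with `2s + (n-1)ν < 0`, and
`D = n - (s - s²)/(2s + (n-1)ν)`. Then `0 ≤ D ≤ n`, with `D > 0` whenever `s > -n`. -/
theorem stmt18 (n : ℕ) (hn : 2 ≤ n) (s ν : ℝ) (hs0 : -(n:ℝ) ≤ s) (hs1 : s ≤ 0)
    (hνl : -s/(n:ℝ) ≤ ν)
    (hνu : ν ≤ ((3 - 2*(n:ℝ))*s + 1 - 2*(n:ℝ) +
        Real.sqrt ((1 - s) * ((4*(n:ℝ) - 5)*s + 4*(n:ℝ)^2 - 4*(n:ℝ) + 1)))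
      / (2*((n:ℝ) - 1)^2))
    (hden : 2*s + ((n:ℝ) - 1)*ν < 0)
    (D : ℝ) (hD : D = (n:ℝ) - (s - s^2)/(2*s + ((n:ℝ) - 1)*ν)) :
    0 ≤ D ∧ D ≤ (n:ℝ) ∧ (-(n:ℝ) < s → 0 < D) := by
  have hN : (2:ℝ) ≤ (n:ℝ) := by exact_mod_cast hn
  set N := (n:ℝ) with hNdef
  have hN1 : (0:ℝ) < N - 1 := by linarith
  have hN0 : (0:ℝ) ≤ N := by linarith
  have hsN : 0 ≤ s + N := by linarith
  have hnegs : 0 ≤ -s := by linarith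
  set E := (1 - s) * ((4*N - 5)*s + 4*N^2 - 4*N + 1) with hEdef
  have hE2 : (0:ℝ) ≤ (4*N - 5)*s + 4*N^2 - 4*N + 1 := by
    nlinarith [mul_nonneg hsN (show (0:ℝ) ≤ 4*N - 5 by linarith)]
  have hE : 0 ≤ E := mul_nonneg (by linarith) hE2
  set q := Real.sqrt E with hqdef
  have hq0 : 0 ≤ q := Real.sqrt_nonneg _
  have hq2 : q^2 = E := Real.sq_sqrt hE
  set R := -(2*N^2 - 3*N + 2)*s - 2*(N-1)*s^2 + 2*N^2 - N with hRdef
  have hR : 0 ≤ R := by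
    nlinarith [mul_nonneg (mul_nonneg hN1.le hnegs) hsN,
      mul_nonneg hN1.le hnegs, mul_nonneg hN1.le hsN, hnegs, hsN]
  have hL : (0:ℝ) ≤ (N-1)*s + N^2 - N + 1 := by
    nlinarith [mul_nonneg hN1.le hsN]
  have hfac : R^2 - N^2*E =
      4*((N-1)*(-s)) * ((s+N)*(1-s)) * ((N-1)*s + N^2 - N + 1) := by
    rw [hRdef, hEdef]; ring
  have hdiff : N^2 * E ≤ R^2 := by
    have hprod : 0 ≤ 4*((N-1)*(-s)) * ((s+N)*(1-s)) * ((N-1)*s + N^2 - N + 1) :=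
      mul_nonneg (mul_nonneg
        (mul_nonneg (by norm_num : (0:ℝ) ≤ 4) (mul_nonneg hN1.le hnegs))
        (mul_nonneg hsN (by linarith : (0:ℝ) ≤ 1 - s))) hL
    linarith [hfac, hprod]
  -- key inequality : N * q ≤ R
  have hkey : N * q ≤ R := by
    have h1 : (N*q)^2 ≤ R^2 := by rw [mul_pow, hq2]; exact hdiff
    calc N*q = Real.sqrt ((N*q)^2) := (Real.sqrt_sq (mul_nonneg hN0 hq0)).symm
      _ ≤ Real.sqrt (R^2) := Real.sqrt_le_sqrt h1
      _ = R := Real.sqrt_sq hR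
  -- from hνu : 2(N-1)^2 ν ≤ A + q
  have hA : 2*(N-1)^2 * ν ≤ (3 - 2*N)*s + 1 - 2*N + q := by
    rw [le_div_iff₀ (by positivity : (0:ℝ) < 2*(N-1)^2)] at hνu
    linarith
  have hmain : N * (2*s + (N-1)*ν) ≤ s - s^2 := by
    have h2 : 2*(N-1) * (N * (2*s + (N-1)*ν)) ≤ 2*(N-1) * (s - s^2) := by
      linarith [hkey, mul_le_mul_of_nonneg_left hA hN0]
    have := (mul_le_mul_iff_right₀ (by linarith : (0:ℝ) < 2*(N-1))).mp h2
    linarith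
  have hDge : 0 ≤ D := by
    rw [hD]
    have : (s - s^2)/(2*s + (N-1)*ν) ≤ N := by
      rw [div_le_iff_of_neg hden]; linarith [hmain]
    linarith
  have hDle : D ≤ N := by
    rw [hD]
    have : 0 ≤ (s - s^2)/(2*s + (N-1)*ν) :=
      div_nonneg_iff.mpr (Or.inr ⟨by nlinarith, hden.le⟩)
    linarith
  refine ⟨hDge, hDle, ?_⟩
  intro hsgt
  rcases eq_or_lt_of_le hs1 with hse | hslt
  · rw [hD, hse]
    norm_num
    linarith
  · -- strict case: s < 0 and -N < s
    have hdiff' : N^2 * E < R^2 := by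
      have h1 : 0 < 4*((N-1)*(-s)) := by nlinarith
      have h2 : 0 < (s+N)*(1-s) := by nlinarith
      have h3 : 0 < (N-1)*s + N^2 - N + 1 := by nlinarith [mul_pos hN1 (show 0 < s + N by linarith)]
      nlinarith [mul_pos (mul_pos h1 h2) h3, hfac]
    have hkey' : N * q < R := by
      have h1 : (N*q)^2 < R^2 := by rw [mul_pow, hq2]; exact hdiff'
      calc N*q = Real.sqrt ((N*q)^2) := (Real.sqrt_sq (mul_nonneg hN0 hq0)).symm
        _ < Real.sqrt (R^2) := Real.sqrt_lt_sqrt (sq_nonneg _) h1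
        _ = R := Real.sqrt_sq hR
    have hmain' : N * (2*s + (N-1)*ν) < s - s^2 := by
      have h2 : 2*(N-1) * (N * (2*s + (N-1)*ν)) < 2*(N-1) * (s - s^2) := by
        linarith [hkey', mul_le_mul_of_nonneg_left hA hN0]
      have := (mul_lt_mul_iff_right₀ (by linarith : (0:ℝ) < 2*(N-1))).mp h2
      linarith
    rw [hD]
    have : (s - s^2)/(2*s + (N-1)*ν) < N := by
      rw [div_lt_iff_of_neg hden]; linarith [hmain']
    linarith
end
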